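/- arXiv:1303.0409 — 5 statements merged into one kernel-verified Lean document; each statement's English description precedes it below -/
import Mathlib

section
/- The Cayley transform C(q',p') = ((1+p')⁻¹·q', (1+p')⁻¹·(1−p')), defined for (q',p') on the unit sphere S = {|q'|²+|p'|² = 1} ⊂ ℍⁿ×ℍ with p' ≠ −1, maps into the Siegel boundary {(q,p) : Re(p) = |q|²}, and the map (q,p) ↦ (2(1+p)⁻¹·q, (1+p)⁻¹·(1−p)) is its two-sided inverse. -/
/-!
For `cayley p = (1 + p)⁻¹ * (1 - p)` in a division ring with `1 + p ≠ 0`, one has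
`1 + cayley p = (1 + p)⁻¹ * 2` and `1 - cayley p = (1 + p)⁻¹ * (2 * p)`; hence `cayley` is an
involution and the `q`-components are recovered after a factor `2`. For the metric statements,
`‖1 ± p‖² = 1 ± 2 Re p + ‖p‖²` gives `Re (cayley p) = (1 - ‖p‖²) / ‖1 + p‖²`; multiplying by
`‖1 + p‖²` turns the sphere equation into the Siegel equation and back.
-/

open Quaternion

section DivisionRing

variable {R : Type*} [DivisionRing R] {p : R}

def cayley (p : R) : R := (1 + p)⁻¹ * (1 - p)

theorem one_add_cayley (hp : 1 + p ≠ 0) : 1 + cayley p = (1 + p)⁻¹ * 2 := by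
  calc 1 + cayley p = (1 + p)⁻¹ * ((1 + p) + (1 - p)) := by
        rw [mul_add, inv_mul_cancel₀ hp, cayley]
    _ = (1 + p)⁻¹ * 2 := by rw [add_add_sub_cancel, one_add_one_eq_two]

theorem one_sub_cayley (hp : 1 + p ≠ 0) : 1 - cayley p = (1 + p)⁻¹ * (2 * p) := by
  calc 1 - cayley p = (1 + p)⁻¹ * ((1 + p) - (1 - p)) := by
        rw [mul_sub, inv_mul_cancel₀ hp, cayley]
    _ = (1 + p)⁻¹ * (2 * p) := by rw [add_sub_sub_cancel, two_mul]

theorem inv_one_add_cayley (hp : 1 + p ≠ 0) : (1 + cayley p)⁻¹ = 2⁻¹ * (1 + p) := by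
  rw [one_add_cayley hp, mul_inv_rev, inv_inv]

variable [NeZero (2 : R)]

theorem cayley_cayley (hp : 1 + p ≠ 0) : cayley (cayley p) = p := by
  rw [cayley, inv_one_add_cayley hp, one_sub_cayley hp, mul_assoc, mul_inv_cancel_left₀ hp,
    inv_mul_cancel_left₀ two_ne_zero]

theorem two_mul_inv_one_add_cayley_mul (hp : 1 + p ≠ 0) (q : R) :
    2 * ((1 + cayley p)⁻¹ * ((1 + p)⁻¹ * q)) = q := by
  rw [inv_one_add_cayley hp, mul_assoc, mul_inv_cancel_left₀ hp,
    mul_inv_cancel_left₀ two_ne_zero]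

theorem inv_one_add_cayley_mul_two_mul (hp : 1 + p ≠ 0) (q : R) :
    (1 + cayley p)⁻¹ * (2 * ((1 + p)⁻¹ * q)) = q := by
  rw [(Commute.ofNat_right _ 2).left_comm, two_mul_inv_one_add_cayley_mul hp]

end DivisionRing

theorem sq_norm_inv_mul {R : Type*} [NormedDivisionRing R] (a b : R) :
    ‖a⁻¹ * b‖ ^ 2 = ‖b‖ ^ 2 / ‖a‖ ^ 2 := by
  rw [norm_mul, norm_inv, mul_pow, inv_pow, inv_mul_eq_div]

namespace Quaternion

instance : CharZero ℍ[ℝ] := charZero_of_injective_algebraMap (algebraMap ℝ ℍ[ℝ]).injective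

theorem sq_norm_one_add (p : ℍ[ℝ]) : ‖1 + p‖ ^ 2 = 1 + 2 * p.re + ‖p‖ ^ 2 := by
  rw [norm_add_sq_real, inner_def, one_mul, re_star, norm_one, one_pow]

theorem sq_norm_one_sub (p : ℍ[ℝ]) : ‖1 - p‖ ^ 2 = 1 - 2 * p.re + ‖p‖ ^ 2 := by
  rw [norm_sub_sq_real, inner_def, one_mul, re_star, norm_one, one_pow]

theorem re_cayley (p : ℍ[ℝ]) : (cayley p).re = (1 - ‖p‖ ^ 2) / ‖1 + p‖ ^ 2 := by
  have hstar : (star (1 + p) * (1 - p)).re = 1 - normSq p := by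
    rw [star_add, star_one, add_mul, one_mul, mul_sub, mul_one, star_mul_self]
    simp only [re_sub, re_add, re_one, re_star, re_coe]
    ring
  rw [cayley, inv_def, smul_mul_assoc, re_smul, smul_eq_mul, hstar, normSq_eq_norm_mul_self,
    normSq_eq_norm_mul_self, ← sq, ← sq, inv_mul_eq_div]

theorem norm_two : ‖(2 : ℍ[ℝ])‖ = 2 :=
  (norm_coe 2).trans (Real.norm_ofNat 2)

variable {ι : Type*} [Fintype ι] {q : ι → ℍ[ℝ]} {p : ℍ[ℝ]}

theorem one_add_ne_zero_of_re_eq_sum_sq_norm (h : p.re = ∑ i, ‖q i‖ ^ 2) : 1 + p ≠ 0 := by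
  have hre : 0 ≤ p.re := h ▸ Finset.sum_nonneg fun i _ => sq_nonneg ‖q i‖
  intro h0
  have : (1 + p).re = 0 := by rw [h0, re_zero]
  rw [re_add, re_one] at this
  linarith

theorem re_cayley_eq_sum_sq_norm_inv_mul (h : ∑ i, ‖q i‖ ^ 2 + ‖p‖ ^ 2 = 1) :
    (cayley p).re = ∑ i, ‖(1 + p)⁻¹ * q i‖ ^ 2 := by
  simp only [re_cayley, sq_norm_inv_mul, ← Finset.sum_div, ← h, add_sub_cancel_right]

theorem sum_sq_norm_two_mul_inv_mul_add_sq_norm_cayley (h : p.re = ∑ i, ‖q i‖ ^ 2) :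
    ∑ i, ‖2 * ((1 + p)⁻¹ * q i)‖ ^ 2 + ‖cayley p‖ ^ 2 = 1 := by
  have hp : ‖1 + p‖ ^ 2 ≠ 0 := by simpa using one_add_ne_zero_of_re_eq_sum_sq_norm h
  calc ∑ i, ‖2 * ((1 + p)⁻¹ * q i)‖ ^ 2 + ‖cayley p‖ ^ 2
      = (4 * p.re + ‖1 - p‖ ^ 2) / ‖1 + p‖ ^ 2 := by
        simp only [norm_mul (2 : ℍ[ℝ]), mul_pow, norm_two, sq_norm_inv_mul, cayley,
          ← Finset.mul_sum, ← Finset.sum_div, ← h]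
        ring
    _ = 1 := by rw [div_eq_one_iff_eq hp, sq_norm_one_add, sq_norm_one_sub]; ring

end Quaternion

/-- The Cayley transform `C(q',p') = ((1+p')⁻¹q', (1+p')⁻¹(1−p'))` maps the unit sphere
minus the point `p' = −1` into the Siegel boundary `{Re p = |q|²}`, and the map
`(q,p) ↦ (2(1+p)⁻¹q, (1+p)⁻¹(1−p))` is its two-sided inverse. -/
theorem cayley_transform (n : ℕ) :
    (∀ (q' : Fin n → ℍ[ℝ]) (p' : ℍ[ℝ]),
      (∑ i, ‖q' i‖ ^ 2) + ‖p'‖ ^ 2 = 1 → p' ≠ -1 →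
      -- C maps into the Siegel boundary
      ((1 + p')⁻¹ * (1 - p')).re = ∑ i, ‖(1 + p')⁻¹ * q' i‖ ^ 2 ∧
      -- C⁻¹ ∘ C = id on the sphere minus the point
      (∀ i, 2 * ((1 + (1 + p')⁻¹ * (1 - p'))⁻¹ * ((1 + p')⁻¹ * q' i)) = q' i) ∧
      (1 + (1 + p')⁻¹ * (1 - p'))⁻¹ * (1 - (1 + p')⁻¹ * (1 - p')) = p') ∧
    (∀ (q : Fin n → ℍ[ℝ]) (p : ℍ[ℝ]),
      p.re = ∑ i, ‖q i‖ ^ 2 →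
      -- C⁻¹ maps the Siegel boundary to the sphere
      ((∑ i, ‖2 * ((1 + p)⁻¹ * q i)‖ ^ 2) + ‖(1 + p)⁻¹ * (1 - p)‖ ^ 2 = 1) ∧
      -- C ∘ C⁻¹ = id on the Siegel boundary
      (∀ i, (1 + (1 + p)⁻¹ * (1 - p))⁻¹ * (2 * ((1 + p)⁻¹ * q i)) = q i) ∧
      (1 + (1 + p)⁻¹ * (1 - p))⁻¹ * (1 - (1 + p)⁻¹ * (1 - p)) = p) := by
  refine ⟨fun q' p' hsphere hne => ?_, fun q p hsiegel => ?_⟩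
  · have hp : 1 + p' ≠ 0 := fun h => hne (eq_neg_of_add_eq_zero_right h)
    exact ⟨re_cayley_eq_sum_sq_norm_inv_mul hsphere,
      fun i => two_mul_inv_one_add_cayley_mul hp (q' i), cayley_cayley hp⟩
  · have hp : 1 + p ≠ 0 := one_add_ne_zero_of_re_eq_sum_sq_norm hsiegel
    exact ⟨sum_sq_norm_two_mul_inv_mul_add_sq_norm_cayley hsiegel,
      fun i => inv_one_add_cayley_mul_two_mul hp (q i), cayley_cayley hp⟩
end

section
/- The inversion σ on the Siegel model of the quaternionic Heisenberg group, given by σ(q,p) = (−p⁻¹·q, p⁻¹) for p ≠ 0, maps the Siegel boundary {Re(p)=|q|²} minus the origin to itself and is an involution: σ∘σ = id. -/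
/-! Both `Re (p⁻¹) = Re p / ‖p‖²` and `‖p⁻¹ x‖² = ‖x‖² / ‖p‖²`, so σ divides both sides of the
boundary equation by `‖p‖²`. On the boundary `p = 0` forces `q = 0`, hence `p ≠ 0` away from the
origin, and then `σ ∘ σ = id` is just `(p⁻¹)⁻¹ = p`. -/

open Quaternion

namespace Quaternion

theorem re_inv_eq_div_norm_sq (p : ℍ[ℝ]) : (p⁻¹).re = p.re / ‖p‖ ^ 2 := by
  rw [inv_def, re_smul, re_star, smul_eq_mul, sq, ← normSq_eq_norm_mul_self, inv_mul_eq_div]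

theorem norm_neg_inv_mul_sq (p x : ℍ[ℝ]) : ‖-p⁻¹ * x‖ ^ 2 = ‖x‖ ^ 2 / ‖p‖ ^ 2 := by
  rw [norm_mul, norm_neg, norm_inv, mul_pow, inv_pow, inv_mul_eq_div]

end Quaternion

theorem re_inv_eq_sum_norm_neg_inv_mul_sq {ι : Type*} [Fintype ι] {q : ι → ℍ[ℝ]} {p : ℍ[ℝ]}
    (hb : p.re = ∑ i, ‖q i‖ ^ 2) : (p⁻¹).re = ∑ i, ‖-p⁻¹ * q i‖ ^ 2 := by
  simp only [re_inv_eq_div_norm_sq, norm_neg_inv_mul_sq, ← Finset.sum_div, hb]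

theorem ne_zero_of_re_eq_sum_norm_sq {ι : Type*} [Fintype ι] {q : ι → ℍ[ℝ]} {p : ℍ[ℝ]}
    (hb : p.re = ∑ i, ‖q i‖ ^ 2) (h0 : (q, p) ≠ (0, 0)) : p ≠ 0 := by
  rintro rfl
  have hq : q = 0 := by
    ext1 i
    have hsum : ∑ i, ‖q i‖ ^ 2 = 0 := hb.symm
    simpa using (Finset.sum_eq_zero_iff_of_nonneg fun i _ => by positivity).1 hsum i
      (Finset.mem_univ i)
  exact h0 (by rw [hq])

/-- The inversion `σ(q,p) = (−p⁻¹q, p⁻¹)` maps the Siegel boundary `{Re p = |q|²}`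
minus the origin to itself and is an involution. -/
theorem siegel_inversion (n : ℕ) (q : Fin n → ℍ[ℝ]) (p : ℍ[ℝ])
    (hb : p.re = ∑ i, ‖q i‖ ^ 2) (h0 : (q, p) ≠ (0, 0)) :
    -- σ maps into the Siegel boundary minus the origin
    ((p⁻¹).re = ∑ i, ‖-p⁻¹ * q i‖ ^ 2) ∧
    (((fun i => -p⁻¹ * q i : Fin n → ℍ[ℝ]), p⁻¹) ≠ (0, 0)) ∧
    -- σ ∘ σ = id
    (∀ i, -(p⁻¹)⁻¹ * (-p⁻¹ * q i) = q i) ∧ (p⁻¹)⁻¹ = p := by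
  have hp : p ≠ 0 := ne_zero_of_re_eq_sum_norm_sq hb h0
  refine ⟨re_inv_eq_sum_norm_neg_inv_mul_sq hb, ?_, fun i => ?_, inv_inv p⟩
  · exact fun h => inv_ne_zero hp (congrArg Prod.snd h)
  · rw [inv_inv, ← mul_assoc, neg_mul_neg, mul_inv_cancel₀ hp, one_mul]
end

section
/- In the direct product model G(ℍ) = ℍⁿ × Im(ℍ), the inversion is given by σ(q,ω) = (−(|q|²−ω)⁻¹·q, −ω/(|q|⁴+|ω|²)), and it is an involution on G(ℍ) ∖ {(0,0)}. -/
/-!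
Write `u = |q|² − ω` for the Siegel coordinate of `(q, ω)`. Since `ω` is imaginary,
`ū = |q|² + ω` and `|u|² = |q|⁴ + |ω|²`, so `σ(q, ω) = (−u⁻¹q, −ω/|u|²)`. The Siegel coordinate
of `σ(q, ω)` is then `(|q|² + ω)/|u|² = ū/|u|² = u⁻¹`: in these coordinates `σ` acts by
inversion, and applying it twice gives back `(u u⁻¹ q, |u|²ω/|u|²) = (q, ω)`.
-/

open Quaternion

/-- The inversion on the direct product model `G(ℍ) = ℍⁿ × Im(ℍ)`:
`σ(q,ω) = (−(|q|²−ω)⁻¹·q, −ω/(|q|⁴+|ω|²))`. -/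
noncomputable def qcInv {n : ℕ} (x : (Fin n → ℍ[ℝ]) × ℍ[ℝ]) : (Fin n → ℍ[ℝ]) × ℍ[ℝ] :=
  (fun i => -((((∑ j, ‖x.1 j‖ ^ 2 : ℝ) : ℍ[ℝ]) - x.2)⁻¹ * x.1 i),
   -(((∑ j, ‖x.1 j‖ ^ 2) ^ 2 + ‖x.2‖ ^ 2 : ℝ)⁻¹ • x.2))

namespace Quaternion

theorem norm_sq_eq_normSq (a : ℍ[ℝ]) : ‖a‖ ^ 2 = normSq a := by
  rw [normSq_eq_norm_mul_self, sq]

theorem normSq_coe_sub_of_re_eq_zero (a : ℝ) {ω : ℍ[ℝ]} (hω : ω.re = 0) :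
    normSq ((a : ℍ[ℝ]) - ω) = a ^ 2 + ‖ω‖ ^ 2 := by
  rw [norm_sq_eq_normSq, normSq_def', normSq_def']
  simp only [re_sub, re_coe, imI_sub, imI_coe, imJ_sub, imJ_coe, imK_sub, imK_coe, hω]
  ring

end Quaternion

theorem sum_norm_sq_eq_zero_iff {ι E : Type*} [Fintype ι] [NormedAddCommGroup E] {q : ι → E} :
    ∑ j, ‖q j‖ ^ 2 = 0 ↔ q = 0 := by
  simp [Finset.sum_eq_zero_iff_of_nonneg fun j _ => sq_nonneg ‖q j‖, funext_iff]

section SiegelCoord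

variable {n : ℕ} {x : (Fin n → ℍ[ℝ]) × ℍ[ℝ]}

noncomputable def siegelCoord (x : (Fin n → ℍ[ℝ]) × ℍ[ℝ]) : ℍ[ℝ] :=
  ((∑ j, ‖x.1 j‖ ^ 2 : ℝ) : ℍ[ℝ]) - x.2

theorem normSq_siegelCoord (hx : x.2.re = 0) :
    normSq (siegelCoord x) = (∑ j, ‖x.1 j‖ ^ 2) ^ 2 + ‖x.2‖ ^ 2 :=
  normSq_coe_sub_of_re_eq_zero _ hx

theorem siegelCoord_eq_zero_iff (hx : x.2.re = 0) : siegelCoord x = 0 ↔ x = 0 := by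
  rw [← normSq_eq_zero, normSq_siegelCoord hx,
    add_eq_zero_iff_of_nonneg (by positivity) (by positivity), pow_eq_zero_iff two_ne_zero,
    pow_eq_zero_iff two_ne_zero, sum_norm_sq_eq_zero_iff, norm_eq_zero, Prod.ext_iff]
  rfl

theorem qcInv_fst (x : (Fin n → ℍ[ℝ]) × ℍ[ℝ]) (i : Fin n) :
    (qcInv x).1 i = -((siegelCoord x)⁻¹ * x.1 i) :=
  rfl

theorem qcInv_snd (hx : x.2.re = 0) :
    (qcInv x).2 = -((normSq (siegelCoord x))⁻¹ • x.2) := by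
  rw [normSq_siegelCoord hx]
  rfl

theorem qcInv_snd_re (hx : x.2.re = 0) : (qcInv x).2.re = 0 := by
  simp [qcInv_snd hx, hx]

theorem siegelCoord_qcInv (hx : x.2.re = 0) : siegelCoord (qcInv x) = (siegelCoord x)⁻¹ := by
  have hnorm (j : Fin n) : ‖(qcInv x).1 j‖ ^ 2 = (normSq (siegelCoord x))⁻¹ * ‖x.1 j‖ ^ 2 := by
    rw [qcInv_fst, norm_neg, norm_mul, norm_inv, mul_pow, inv_pow, norm_sq_eq_normSq]
  have hstar : star (siegelCoord x) = ((∑ j, ‖x.1 j‖ ^ 2 : ℝ) : ℍ[ℝ]) + x.2 := by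
    rw [siegelCoord, star_sub, star_coe, star_eq_neg.mpr hx, sub_neg_eq_add]
  rw [inv_def, hstar, siegelCoord, qcInv_snd hx, Finset.sum_congr rfl fun j _ => hnorm j,
    ← Finset.mul_sum, smul_add, smul_coe, sub_neg_eq_add]

theorem qcInv_qcInv (hx : x.2.re = 0) (hx0 : x ≠ 0) : qcInv (qcInv x) = x := by
  have hu : siegelCoord x ≠ 0 := (siegelCoord_eq_zero_iff hx).not.mpr hx0
  have hD : normSq (siegelCoord x) ≠ 0 := normSq_eq_zero.not.mpr hu
  refine Prod.ext (funext fun i => ?_) ?_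
  · rw [qcInv_fst, siegelCoord_qcInv hx, qcInv_fst, inv_inv, mul_neg, neg_neg, ← mul_assoc,
      mul_inv_cancel₀ hu, one_mul]
  · rw [qcInv_snd (qcInv_snd_re hx), siegelCoord_qcInv hx, map_inv₀, inv_inv, qcInv_snd hx,
      smul_neg, neg_neg, smul_smul, mul_inv_cancel₀ hD, one_smul]

end SiegelCoord

/-- The inversion `σ` preserves `G(ℍ) ∖ {(0,0)}` and is an involution there. -/
theorem qcInv_involution (n : ℕ) (x : (Fin n → ℍ[ℝ]) × ℍ[ℝ])
    (him : x.2.re = 0) (hx : x ≠ 0) :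
    (qcInv x).2.re = 0 ∧ qcInv x ≠ 0 ∧ qcInv (qcInv x) = x := by
  refine ⟨qcInv_snd_re him, fun h => hx ?_, qcInv_qcInv him hx⟩
  rw [← qcInv_qcInv him hx, h]
  ext <;> simp [qcInv]
end

section
/- The gauge norm N(q,ω) = (|q|⁴+|ω|²)^{1/4} on the quaternionic Heisenberg group satisfies N(σ(q,ω)) = 1/N(q,ω) for the inversion σ(q,ω) = (−(|q|²−ω)⁻¹·q, −ω/(|q|⁴+|ω|²)), for all (q,ω) ≠ (0,0). -/
open Quaternion

/-- The gauge norm `N(q,ω) = (|q|⁴+|ω|²)^{1/4}`. -/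
noncomputable def gaugeN {n : ℕ} (x : (Fin n → ℍ[ℝ]) × ℍ[ℝ]) : ℝ :=
  ((∑ i, ‖x.1 i‖ ^ 2) ^ 2 + ‖x.2‖ ^ 2) ^ ((1 : ℝ) / 4)

/-
Write `A = |q|²` and `D = A² + |ω|²`, so that `N(q,ω)⁴ = D`. Because `ω` is purely
imaginary, `D = |A − ω|²`, hence `σ` divides every `|qᵢ|²` by `D` and `|ω|` by `D`.
The new value of `N⁴` is therefore `(A² + |ω|²) / D² = 1 / D`.
-/

theorem Quaternion.norm_sq_coe_sub_of_re_eq_zero (a : ℝ) {ω : ℍ[ℝ]} (hω : ω.re = 0) :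
    ‖(a : ℍ[ℝ]) - ω‖ ^ 2 = a ^ 2 + ‖ω‖ ^ 2 := by
  rw [sq, sq ‖ω‖, ← normSq_eq_norm_mul_self, ← normSq_eq_norm_mul_self, normSq_def',
    normSq_def']
  simp only [re_sub, re_coe, hω, imI_sub, imI_coe, imJ_sub, imJ_coe, imK_sub, imK_coe]
  ring

theorem sum_norm_sq_mul_left {ι 𝕜 : Type*} [Fintype ι] [NormedDivisionRing 𝕜] (c : 𝕜)
    (q : ι → 𝕜) : ∑ i, ‖c * q i‖ ^ 2 = ‖c‖ ^ 2 * ∑ i, ‖q i‖ ^ 2 := by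
  simp only [norm_mul, mul_pow, Finset.mul_sum]

theorem div_sq_add_sq_sq_add_div_sq_add_sq_sq (a b : ℝ) :
    (a / (a ^ 2 + b ^ 2)) ^ 2 + (b / (a ^ 2 + b ^ 2)) ^ 2 = (a ^ 2 + b ^ 2)⁻¹ := by
  rw [div_pow, div_pow, ← add_div, sq (a ^ 2 + b ^ 2), div_self_mul_self']

theorem sum_norm_sq_qcInv_fst {n : ℕ} {x : (Fin n → ℍ[ℝ]) × ℍ[ℝ]} (hx : x.2.re = 0) :
    ∑ i, ‖(qcInv x).1 i‖ ^ 2 =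
      (∑ i, ‖x.1 i‖ ^ 2) / ((∑ i, ‖x.1 i‖ ^ 2) ^ 2 + ‖x.2‖ ^ 2) := by
  simp only [qcInv, norm_neg]
  rw [sum_norm_sq_mul_left, norm_inv, inv_pow, norm_sq_coe_sub_of_re_eq_zero _ hx, inv_mul_eq_div]

theorem norm_qcInv_snd {n : ℕ} (x : (Fin n → ℍ[ℝ]) × ℍ[ℝ]) :
    ‖(qcInv x).2‖ = ‖x.2‖ / ((∑ i, ‖x.1 i‖ ^ 2) ^ 2 + ‖x.2‖ ^ 2) := by
  rw [qcInv, norm_neg, norm_smul, norm_inv, Real.norm_of_nonneg (by positivity), inv_mul_eq_div]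

theorem gauge_norm_inversion_general (n : ℕ) (x : (Fin n → ℍ[ℝ]) × ℍ[ℝ])
    (him : x.2.re = 0) :
    gaugeN (qcInv x) = 1 / gaugeN x := by
  rw [gaugeN, gaugeN, sum_norm_sq_qcInv_fst him, norm_qcInv_snd,
    div_sq_add_sq_sq_add_div_sq_add_sq_sq, Real.inv_rpow (by positivity), one_div (_ ^ _)]

/-- `N(σ(q,ω)) = 1/N(q,ω)` for all `(q,ω) ≠ (0,0)`. -/
theorem gauge_norm_inversion (n : ℕ) (x : (Fin n → ℍ[ℝ]) × ℍ[ℝ])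
    (him : x.2.re = 0) (hx : x ≠ 0) :
    gaugeN (qcInv x) = 1 / gaugeN x :=
  gauge_norm_inversion_general n x him
end

section
/- If (q',p') lies on the unit sphere {|q'|²+|p'|²=1} ⊂ ℍⁿ×ℍ with p' ≠ −1, and (q,p) = C(q',p') = ((1+p')⁻¹q', (1+p')⁻¹(1−p')), then Re(p) = |q|², i.e. the Cayley image lies on the boundary of the Siegel domain. -/
open Quaternion

/-- If `(q',p')` lies on the unit sphere `{|q'|²+|p'|² = 1} ⊂ ℍⁿ×ℍ` with `p' ≠ −1`, then
the Cayley image `(q,p) = ((1+p')⁻¹q', (1+p')⁻¹(1−p'))` satisfies `Re(p) = |q|²`, i.e.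
it lies on the boundary of the Siegel domain. -/
theorem cayley_image_in_siegel_boundary (n : ℕ) (q' : Fin n → ℍ[ℝ]) (p' : ℍ[ℝ])
    (hs : (∑ i, ‖q' i‖ ^ 2) + ‖p'‖ ^ 2 = 1) (hp : p' ≠ -1) :
    ((1 + p')⁻¹ * (1 - p')).re = ∑ i, ‖(1 + p')⁻¹ * q' i‖ ^ 2 := by
  have ha : (1 + p') ≠ 0 := by
    intro h; apply hp; rw [eq_neg_iff_add_eq_zero, add_comm]; exact h
  have hns : ‖p'‖ ^ 2 = normSq p' := by
    rw [sq, ← normSq_eq_norm_mul_self]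
  have key : ∑ i, ‖q' i‖ ^ 2 = 1 - normSq p' := by rw [← hns]; linarith
  simp_rw [norm_mul, mul_pow, ← Finset.mul_sum, key, norm_inv, inv_pow, sq,
    ← normSq_eq_norm_mul_self]
  rw [Quaternion.inv_def, smul_mul_assoc]
  have hn : normSq (1 + p') ≠ 0 := normSq_ne_zero.2 ha
  rw [Quaternion.re_smul, smul_eq_mul]
  congr 1
  simp only [Quaternion.normSq_def', Quaternion.re_mul, Quaternion.re_star, Quaternion.imI_star, Quaternion.imJ_star, Quaternion.imK_star]
  simp
  ring
end
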